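/- Under the interference-alignment hypotheses, for every nonempty subset X ⊆ {1,…,k}, the r matrices I, Σ_{j∈X} C_{2,j}, Σ_{j∈X} C_{3,j}, …, Σ_{j∈X} C_{r,j} form a linearly independent family in the 𝔽-vector space of l × l matrices over 𝔽. -/

import Mathlib

/-! Fix `i ∈ X` and multiply a relation `∑ u, g u • M u = 0` on the left by `S i`. Writing
`M u = C u i + (M u - C u i)`, alignment puts every row of `S i * (M u - C u i)` into
`rowSpace (S i) = rowSpace (S i * C 0 i)`, so independence of the spaces `rowSpace (S i * C u i)`
forces `g u • (S i * C u i) = 0` for `u ≠ 0`. Since `S i ≠ 0` and `C u i` is invertible, `g u = 0`;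
finally `M 0 = 1` gives `g 0 = 0`. -/

open Submodule Set

theorem iSupIndep.eq_zero_of_sum_add_eq_zero {ι R N : Type*} [Fintype ι] [DecidableEq ι]
    [Ring R] [AddCommGroup N] [Module R N] {p : ι → Submodule R N} (hp : iSupIndep p)
    {x : ι → N} (hx : ∀ u, x u ∈ p u) {u₀ : ι} {y : N} (hy : y ∈ p u₀)
    (hsum : ∑ u, x u + y = 0) {u : ι} (hu : u ≠ u₀) : x u = 0 := by
  set z : ι → N := x + Pi.single u₀ y with hz
  have hmem : ∀ w ∈ Finset.univ, z w ∈ p w := by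
    intro w _
    rcases eq_or_ne w u₀ with rfl | hw
    · simpa [hz] using add_mem (hx w) hy
    · simpa [hz, Pi.single_eq_of_ne hw] using hx w
  have hzero : ∑ w, z w = 0 := by
    simpa [hz, Finset.sum_add_distrib] using hsum
  simpa [hz, Pi.single_eq_of_ne hu] using
    (iSupIndep_iff_finsetSum_eq_zero_imp_eq_zero p).mp hp _ _ hmem hzero u (Finset.mem_univ u)

theorem iSupIndep.eq_zero_of_sum_rows_eq_zero {ι m n R : Type*} [Fintype ι] [DecidableEq ι]
    [Ring R] {p : ι → Submodule R (n → R)} (hp : iSupIndep p) {A B : ι → Matrix m n R}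
    (hA : ∀ u b, A u b ∈ p u) {u₀ : ι} (hB : ∀ u b, B u b ∈ p u₀)
    (hsum : ∑ u, (A u + B u) = 0) {u : ι} (hu : u ≠ u₀) : A u = 0 := by
  funext b
  show A u b = 0
  refine hp.eq_zero_of_sum_add_eq_zero (fun w => hA w b)
    (sum_mem fun w _ => hB w b : ∑ w, B w b ∈ p u₀) ?_ hu
  have hrow : (∑ w, (A w + B w)) b = ∑ w, (A w b + B w b) := Finset.sum_apply b _ _
  rw [← Finset.sum_add_distrib, ← hrow, hsum]
  rfl

namespace Matrix

variable {ι m n R K : Type*} [Fintype n] [Semiring R]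

theorem mul_sum_row_mem_span_range {S : Matrix m n R} {s : Finset ι} {N : ι → Matrix n n R}
    (h : ∀ j ∈ s, span R (range (S * N j)) ≤ span R (range S)) (b : m) :
    (S * ∑ j ∈ s, N j) b ∈ span R (range S) := by
  have hrow : (∑ j ∈ s, S * N j) b = ∑ j ∈ s, (S * N j) b := Finset.sum_apply b s _
  rw [Matrix.mul_sum, hrow]
  exact sum_mem fun j hj => h j hj (subset_span ⟨b, rfl⟩)

theorem ne_zero_of_iSup_span_range_mul_eq_top [Nonempty n] [Nontrivial R] {S : Matrix m n R}
    {C : ι → Matrix n n R} (h : ⨆ u, span R (range (S * C u)) = ⊤) : S ≠ 0 := by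
  rintro rfl
  have hbot : span R (range (0 : Matrix m n R)) = ⊥ := by
    rw [span_eq_bot]
    rintro _ ⟨b, rfl⟩
    rfl
  simp [hbot] at h

theorem linearIndependent_of_mul_sub_rows_mem [Field K] [Fintype ι] [DecidableEq ι]
    {S : Matrix m n K} {C M : ι → Matrix n n K} {u₀ : ι}
    (hind : iSupIndep fun u => span K (range (S * C u))) (hSC : ∀ u ≠ u₀, S * C u ≠ 0)
    (hM₀ : M u₀ ≠ 0) (hdefect : ∀ u b, (S * (M u - C u)) b ∈ span K (range (S * C u₀))) :
    LinearIndependent K M := by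
  rw [Fintype.linearIndependent_iff]
  intro g hg
  have hsplit : ∑ u, (g u • (S * C u) + g u • (S * (M u - C u))) = 0 := by
    simp_rw [← smul_add, ← Matrix.mul_add, add_sub_cancel, ← Matrix.mul_smul, ← Matrix.mul_sum,
      hg, Matrix.mul_zero]
  have hrest : ∀ u ≠ u₀, g u = 0 := fun u hu =>
    (smul_eq_zero.mp <| hind.eq_zero_of_sum_rows_eq_zero
      (fun w b => smul_mem _ (g w) (subset_span ⟨b, rfl⟩))
      (fun w b => smul_mem _ (g w) (hdefect w b)) hsplit hu).resolve_right (hSC u hu)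
  have hg₀ : g u₀ = 0 := by
    rw [Finset.sum_eq_single u₀ (fun u _ hu => by rw [hrest u hu, zero_smul]) (by simp)] at hg
    exact (smul_eq_zero.mp hg).resolve_right hM₀
  intro u
  rcases eq_or_ne u u₀ with rfl | hu
  · exact hg₀
  · exact hrest u hu

end Matrix

theorem stmt_6 {𝔽 : Type*} [Field 𝔽] (k r l : ℕ)
    (hr : 2 ≤ r) (hl : 0 < l)
    (S : Fin k → Matrix (Fin (l / r)) (Fin l) 𝔽)
    (C : Fin r → Fin k → Matrix (Fin l) (Fin l) 𝔽)
    (hCinv : ∀ u j, IsUnit (C u j))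
    (hC1 : ∀ j, C ⟨0, by omega⟩ j = 1)
    (hIA1 : ∀ (i j : Fin k), j ≠ i → ∀ u : Fin r,
      Submodule.span 𝔽 (Set.range (S i * C u j)) = Submodule.span 𝔽 (Set.range (S i)))
    (hIA2 : ∀ i : Fin k, iSupIndep
      fun u : Fin r => Submodule.span 𝔽 (Set.range (S i * C u i)))
    (hIA3 : ∀ i : Fin k,
      (⨆ u : Fin r, Submodule.span 𝔽 (Set.range (S i * C u i))) = ⊤)
    (X : Finset (Fin k)) (hX : X.Nonempty) :
    LinearIndependent 𝔽
      (fun u : Fin r =>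
        if (u : ℕ) = 0 then (1 : Matrix (Fin l) (Fin l) 𝔽)
        else ∑ j ∈ X, C u j) := by
  classical
  obtain ⟨i, hi⟩ := hX
  have : Nonempty (Fin l) := ⟨⟨0, hl⟩⟩
  set u₀ : Fin r := ⟨0, by omega⟩
  set M : Fin r → Matrix (Fin l) (Fin l) 𝔽 :=
    fun u => if (u : ℕ) = 0 then 1 else ∑ j ∈ X, C u j
  have hM₀ : M u₀ = 1 := if_pos rfl
  have hS : S i ≠ 0 := Matrix.ne_zero_of_iSup_span_range_mul_eq_top (hIA3 i)
  have hSC : ∀ u, S i * C u i ≠ 0 := fun u => by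
    have := (hCinv u i).invertible
    simpa using (Matrix.mul_left_injective_of_invertible (C u i)).ne hS
  have hdefect : ∀ u b, (S i * (M u - C u i)) b ∈ span 𝔽 (range (S i * C u₀ i)) := by
    intro u b
    rw [hC1, Matrix.mul_one]
    by_cases hu : (u : ℕ) = 0
    · obtain rfl : u = u₀ := Fin.ext hu
      rw [hM₀, hC1, sub_self, Matrix.mul_zero]
      exact zero_mem _
    · rw [show M u = ∑ j ∈ X, C u j from if_neg hu, ← Finset.add_sum_erase X _ hi,
        add_sub_cancel_left]
      exact Matrix.mul_sum_row_mem_span_range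
        (fun j hj => (hIA1 i j (Finset.ne_of_mem_erase hj) u).le) b
  exact Matrix.linearIndependent_of_mul_sub_rows_mem (hIA2 i) (fun u _ => hSC u)
    (hM₀ ▸ one_ne_zero) hdefect
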